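/- Let C ⊂ P^2 be the cubic curve x_0^2x_2 + x_1^3 = 0 (a cuspidal cubic). Then the identity component of the subgroup of PGL_3(k) preserving C is the one-dimensional torus consisting of the transformations (x_0 : x_1 : x_2) ↦ (t^3 x_0 : t^2 x_1 : x_2), t ∈ k^*. -/

import Mathlib

/-! A transformation `M` preserving `C` maps the parametrization `x ↦ (x³ : -x² : 1)` of `C` into
`C`, so the ten coefficients of `x ↦ F (M (x³, -x², 1))` vanish. Those of `1`, `x²` and `x³` say
that the gradient of `F` at `M e₂` is orthogonal to all three columns of `M` (to `M e₂` itself by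
Euler's formula); since `M` is invertible that gradient vanishes, so (as `3 ≠ 0`) `M` fixes the
cusp `(0 : 0 : 1)`. The remaining coefficients then force `M = diag(d₀, d₁, d₂)` with
`d₀² d₂ = d₁³`, and a cube root `t` of `d₀ / d₂` writes `M` as `d₂ • diag(t³, t² ω, 1)`
with `ω³ = 1`. -/

open Matrix

/-- The cubic form `x₀²x₂ + x₁³` defining the cuspidal cubic `C ⊂ ℙ²`. -/
def cuspCubic {k : Type*} [Field k] (v : Fin 3 → k) : k :=
  v 0 ^ 2 * v 2 + v 1 ^ 3

/-- `g ∈ GL₃(k)` preserves the plane curve `{F = 0}` (as a transformation of `ℙ²`). -/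
def PreservesPlaneCurve {k : Type*} [Field k] (F : (Fin 3 → k) → k)
    (g : GL (Fin 3) k) : Prop :=
  ∀ v : Fin 3 → k, F ((g : Matrix (Fin 3) (Fin 3) k).mulVec v) = 0 ↔ F v = 0

/-- The diagonal transformation `(x₀:x₁:x₂) ↦ (t³x₀ : t²ωx₁ : x₂)`. -/
def cuspCubicAut {k : Type*} [Field k] (t ω : k) : Matrix (Fin 3) (Fin 3) k :=
  !![t ^ 3, 0, 0; 0, t ^ 2 * ω, 0; 0, 0, 1]

section

variable {k : Type*} [Field k]

lemma cuspCubic_param (x : k) : cuspCubic ![x ^ 3, -x ^ 2, 1] = 0 := by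
  simp only [cuspCubic, cons_val_zero, cons_val_one, cons_val]
  ring

lemma cuspCubic_smul_cuspCubicAut_mulVec {c t ω : k} (hω : ω ^ 3 = 1) (v : Fin 3 → k) :
    cuspCubic ((c • cuspCubicAut t ω) *ᵥ v) = c ^ 3 * t ^ 6 * cuspCubic v := by
  simp only [cuspCubic, cuspCubicAut, mulVec, dotProduct, Fin.sum_univ_three, Matrix.smul_apply,
    of_apply, cons_val', cons_val_fin_one, cons_val_zero, cons_val_one, cons_val, smul_eq_mul]
  linear_combination c ^ 3 * t ^ 6 * v 1 ^ 3 * hω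

lemma preservesPlaneCurve_cuspCubic_of_eq_smul_cuspCubicAut {g : GL (Fin 3) k} {c t : kˣ}
    {ω : k} (hω : ω ^ 3 = 1)
    (hg : (g : Matrix (Fin 3) (Fin 3) k) = (c : k) • cuspCubicAut (t : k) ω) :
    PreservesPlaneCurve cuspCubic g := by
  intro v
  rw [hg, cuspCubic_smul_cuspCubicAut_mulVec hω]
  exact mul_eq_zero_iff_left (by simp)

lemma cuspCubicAut_mul_cuspCubicAut (t s ω η : k) :
    cuspCubicAut t ω * cuspCubicAut s η = cuspCubicAut (t * s) (ω * η) := by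
  simp only [cuspCubicAut, mul_fin_three, mul_zero, zero_mul, add_zero, zero_add, mul_one]
  ring_nf

lemma eq_of_cuspCubicAut_eq_smul {t s c ω : k} (hω : ω ≠ 0)
    (h : cuspCubicAut t ω = c • cuspCubicAut s ω) : t = s := by
  have hc : 1 = c := by simpa [cuspCubicAut] using congrFun (congrFun h 2) 2
  subst hc
  have h3 : t ^ 3 = s ^ 3 := by simpa [cuspCubicAut] using congrFun (congrFun h 0) 0
  have h2 : t ^ 2 = s ^ 2 := by simpa [cuspCubicAut, hω] using congrFun (congrFun h 1) 1
  rcases eq_or_ne s 0 with rfl | hs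
  · simpa using h2
  · exact mul_right_cancel₀ (pow_ne_zero 2 hs) (by linear_combination h3 - t * h2)

def cuspPullbackCoeff (M : Matrix (Fin 3) (Fin 3) k) : Fin 10 → k :=
  ![M 0 2 ^ 2 * M 2 2 + M 1 2 ^ 3,
    0,
    -(M 0 2 ^ 2 * M 2 1 + 2 * M 0 1 * M 0 2 * M 2 2 + 3 * M 1 1 * M 1 2 ^ 2),
    M 0 2 ^ 2 * M 2 0 + 2 * M 0 0 * M 0 2 * M 2 2 + 3 * M 1 0 * M 1 2 ^ 2,
    M 0 1 ^ 2 * M 2 2 + 2 * M 0 1 * M 0 2 * M 2 1 + 3 * M 1 1 ^ 2 * M 1 2,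
    -(2 * M 0 0 * M 0 1 * M 2 2 + 2 * M 0 0 * M 0 2 * M 2 1 + 2 * M 0 1 * M 0 2 * M 2 0
      + 6 * M 1 0 * M 1 1 * M 1 2),
    M 0 0 ^ 2 * M 2 2 + 2 * M 0 0 * M 0 2 * M 2 0 + 3 * M 1 0 ^ 2 * M 1 2 - M 0 1 ^ 2 * M 2 1
      - M 1 1 ^ 3,
    M 0 1 ^ 2 * M 2 0 + 2 * M 0 0 * M 0 1 * M 2 1 + 3 * M 1 0 * M 1 1 ^ 2,
    -(M 0 0 ^ 2 * M 2 1 + 2 * M 0 0 * M 0 1 * M 2 0 + 3 * M 1 0 ^ 2 * M 1 1),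
    M 0 0 ^ 2 * M 2 0 + M 1 0 ^ 3]

lemma cuspCubic_mulVec_param (M : Matrix (Fin 3) (Fin 3) k) (x : k) :
    cuspCubic (M *ᵥ ![x ^ 3, -x ^ 2, 1]) = ∑ i, cuspPullbackCoeff M i * x ^ (i : ℕ) := by
  simp only [cuspCubic, cuspPullbackCoeff, mulVec, dotProduct, Fin.sum_univ_succ,
    Fin.sum_univ_zero, Fin.val_zero, Fin.val_succ, cons_val_zero, cons_val_one, cons_val,
    Fin.succ_zero_eq_one, Fin.succ_one_eq_two, Fin.reduceSucc]
  ring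

lemma cuspPullbackCoeff_eq_zero [Infinite k] {M : Matrix (Fin 3) (Fin 3) k}
    (h : ∀ x : k, cuspCubic (M *ᵥ ![x ^ 3, -x ^ 2, 1]) = 0) : cuspPullbackCoeff M = 0 := by
  let f : Fin 10 ↪ k := Fin.valEmbedding.trans (Infinite.natEmbedding k)
  exact eq_zero_of_forall_index_sum_mul_pow_eq_zero f.injective fun j => by
    rw [← cuspCubic_mulVec_param, h]

section PullbackCoeff

variable {M : Matrix (Fin 3) (Fin 3) k} (hM : M.det ≠ 0) (h : cuspPullbackCoeff M = 0)
include hM h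

lemma col_two_eq_zero_of_cuspPullbackCoeff_eq_zero [NeZero (3 : k)] :
    M 0 2 = 0 ∧ M 1 2 = 0 := by
  have hc : ∀ i, cuspPullbackCoeff M i = 0 := congrFun h
  have h0 := hc 0; have h2 := hc 2; have h3 := hc 3
  simp only [cuspPullbackCoeff, cons_val] at h0 h2 h3
  have hgrad : ![2 * M 0 2 * M 2 2, 3 * M 1 2 ^ 2, M 0 2 ^ 2] ᵥ* M = 0 := by
    ext j
    fin_cases j <;>
      simp only [vecMul, dotProduct, Fin.sum_univ_three, cons_val_zero, cons_val_one, cons_val,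
        Pi.zero_apply, Fin.zero_eta, Fin.mk_one, Fin.reduceFinMk]
    · linear_combination h3
    · linear_combination -h2
    · linear_combination 3 * h0
  have hzero := eq_zero_of_vecMul_eq_zero hM hgrad
  have h1 : 3 * M 1 2 ^ 2 = 0 := by simpa using congrFun hzero 1
  have h2 : M 0 2 ^ 2 = 0 := by simpa using congrFun hzero 2
  exact ⟨pow_eq_zero_iff two_ne_zero |>.mp h2,
    pow_eq_zero_iff two_ne_zero |>.mp ((mul_eq_zero.mp h1).resolve_left three_ne_zero)⟩

lemma eq_diagonal_of_cuspPullbackCoeff_eq_zero [NeZero (3 : k)] :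
    M = diagonal (fun i => M i i) ∧ M 0 0 ^ 2 * M 2 2 = M 1 1 ^ 3 := by
  obtain ⟨h02, h12⟩ := col_two_eq_zero_of_cuspPullbackCoeff_eq_zero hM h
  have hc : ∀ i, cuspPullbackCoeff M i = 0 := congrFun h
  have h4 := hc 4; have h6 := hc 6; have h7 := hc 7; have h8 := hc 8; have h9 := hc 9
  simp only [cuspPullbackCoeff, cons_val, h02, h12, mul_zero, zero_mul, add_zero]
    at h4 h6 h7 h8 h9
  simp only [det_fin_three, h02, h12, mul_zero, zero_mul, add_zero] at hM
  have h22 : M 2 2 ≠ 0 := by rintro h22; apply hM; rw [h22]; ring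
  have h01 : M 0 1 = 0 := by simpa [h22] using h4
  have h00 : M 0 0 ≠ 0 := by rintro h00; apply hM; rw [h00, h01]; ring
  have h11 : M 1 1 ≠ 0 := by rintro h11; apply hM; rw [h11, h01]; ring
  have h10 : M 1 0 = 0 := by simpa [h01, h11, three_ne_zero] using h7
  have h20 : M 2 0 = 0 := by simpa [h10, h00] using h9
  have h21 : M 2 1 = 0 := by simpa [h01, h10, h00] using h8
  refine ⟨?_, by linear_combination h6 + M 0 1 * M 2 1 * h01⟩
  ext i j
  fin_cases i <;> fin_cases j <;> simp [*]

end PullbackCoeff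

lemma exists_diagonal_eq_smul_cuspCubicAut [IsAlgClosed k] {d : Fin 3 → k} (hd0 : d 0 ≠ 0)
    (hd2 : d 2 ≠ 0) (hd : d 0 ^ 2 * d 2 = d 1 ^ 3) :
    ∃ (c t : kˣ) (ω : k), ω ^ 3 = 1 ∧ diagonal d = (c : k) • cuspCubicAut (t : k) ω := by
  obtain ⟨t, ht⟩ := IsAlgClosed.exists_pow_nat_eq (d 0 / d 2) three_pos
  replace ht : t ^ 3 * d 2 = d 0 := by rw [ht, div_mul_cancel₀ _ hd2]
  have ht0 : t ≠ 0 := by rintro rfl; exact hd0 (by simpa using ht.symm)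
  refine ⟨Units.mk0 (d 2) hd2, Units.mk0 t ht0, d 1 / (d 2 * t ^ 2), ?_, ?_⟩
  · field_simp
    linear_combination -hd - d 2 * (d 0 + t ^ 3 * d 2) * ht
  · ext i j
    fin_cases i <;> fin_cases j <;> simp [cuspCubicAut, ← ht] <;> field_simp

lemma exists_eq_smul_cuspCubicAut_of_preservesPlaneCurve [IsAlgClosed k] [NeZero (3 : k)]
    {g : GL (Fin 3) k} (H : PreservesPlaneCurve cuspCubic g) :
    ∃ (c t : kˣ) (ω : k), ω ^ 3 = 1 ∧
      (g : Matrix (Fin 3) (Fin 3) k) = (c : k) • cuspCubicAut (t : k) ω := by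
  have hdet : (g : Matrix (Fin 3) (Fin 3) k).det ≠ 0 :=
    ((isUnit_iff_isUnit_det _).mp g.isUnit).ne_zero
  obtain ⟨hdiag, hd⟩ := eq_diagonal_of_cuspPullbackCoeff_eq_zero hdet
    (cuspPullbackCoeff_eq_zero fun x => (H _).mpr (cuspCubic_param x))
  rw [hdiag, det_diagonal, Fin.prod_univ_three] at hdet
  rw [hdiag]
  exact exists_diagonal_eq_smul_cuspCubicAut (left_ne_zero_of_mul (left_ne_zero_of_mul hdet))
    (right_ne_zero_of_mul hdet) hd

end

/-- Since `cuspCubicAut t ω = cuspCubicAut (t * ω ^ 2) 1` when `ω ^ 3 = 1`, the stabilizer is the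
torus `ω = 1` itself, in particular connected. -/
theorem stmt_5 (k : Type*) [Field k] [IsAlgClosed k] [CharZero k] :
    (∀ g : GL (Fin 3) k,
      PreservesPlaneCurve cuspCubic g ↔
        ∃ (c t : kˣ) (ω : k), ω ^ 3 = 1 ∧
          (g : Matrix (Fin 3) (Fin 3) k) = (c : k) • cuspCubicAut (t : k) ω) ∧
    (∀ t s : k, cuspCubicAut t 1 * cuspCubicAut s 1 = cuspCubicAut (t * s) 1) ∧
    (∀ (t s c : k), cuspCubicAut t 1 = c • cuspCubicAut s 1 → t = s) := by
  refine ⟨fun g => ⟨exists_eq_smul_cuspCubicAut_of_preservesPlaneCurve, ?_⟩,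
    fun t s => by simpa using cuspCubicAut_mul_cuspCubicAut t s 1 1,
    fun t s c => eq_of_cuspCubicAut_eq_smul one_ne_zero⟩
  rintro ⟨c, t, ω, hω, hg⟩
  exact preservesPlaneCurve_cuspCubic_of_eq_smul_cuspCubicAut hω hg
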